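/- arXiv:1909.05487 — 3 statements merged into one kernel-verified Lean document; each statement's English description precedes it below -/
import Mathlib

section
/- Fix positive integers n, m, K, μ, let 𝒢ₙ be a (μ, K, ρ)-sparse distribution on simple graphs with n vertices, let Y(·) be a measurable graph-matrix assignment, and let B be an m×n real random matrix, independent of G ~ 𝒢ₙ, that almost surely satisfies spark(B) > 2K and δ_{2μ} + δ_{3μ} < 1, where δ_s denotes the restricted isometry constant of B of order s. Set A = B·Y(G) (noiseless measurements). Then there exists a measurable estimator X = f(A, B) (realized by the three-stage recovery scheme) such that P(X ≠ Y(G)) ≤ ρ. -/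
open MeasureTheory ProbabilityTheory

noncomputable section

instance {n : ℕ} : MeasurableSpace (SimpleGraph (Fin n)) := ⊤

/-- The degree of vertex `v` in the simple graph `G`. -/
def gdeg {n : ℕ} (G : SimpleGraph (Fin n)) (v : Fin n) : ℕ :=
  Set.ncard {w | G.Adj v w}

/-- `Y` is a graph matrix of the simple graph `G`: a symmetric real matrix with zero
diagonal whose off-diagonal entry `(i,j)` is nonzero exactly when `{i,j}` is an edge. -/
def IsGraphMatrix {n : ℕ} (G : SimpleGraph (Fin n)) (Y : Fin n → Fin n → ℝ) : Prop :=
  (∀ i j, Y i j = Y j i) ∧ (∀ i, Y i i = 0) ∧ (∀ i j, i ≠ j → (Y i j ≠ 0 ↔ G.Adj i j))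

/-- Matrix product of an `m × n` matrix with an `n × p` matrix. -/
def matMul {m n p : ℕ} (B : Fin m → Fin n → ℝ) (Y : Fin n → Fin p → ℝ) :
    Fin m → Fin p → ℝ :=
  fun i j => ∑ k, B i k * Y k j

/-- The spark of a matrix: the smallest number of columns that are linearly dependent
(`⊤` if every collection of columns is linearly independent). -/
def spark {m n : ℕ} (B : Fin m → Fin n → ℝ) : ℕ∞ :=
  sInf {k : ℕ∞ | ∃ s : Finset (Fin n), (s.card : ℕ∞) = k ∧
    ¬ LinearIndependent ℝ (fun j : {x // x ∈ s} => (fun i => B i j.1))}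

/-- The restricted isometry constant of order `s` of `B`: the smallest `δ ≥ 0` such that
`(1−δ)‖x‖₂² ≤ ‖Bx‖₂² ≤ (1+δ)‖x‖₂²` for every `x` with at most `s` nonzero entries. -/
def ric {m n : ℕ} (B : Fin m → Fin n → ℝ) (s : ℕ) : ℝ :=
  sInf {δ : ℝ | 0 ≤ δ ∧ ∀ x : Fin n → ℝ, Set.ncard {j | x j ≠ 0} ≤ s →
    (1 - δ) * (∑ j, x j ^ 2) ≤ (∑ i, (∑ j, B i j * x j) ^ 2) ∧
      (∑ i, (∑ j, B i j * x j) ^ 2) ≤ (1 + δ) * (∑ j, x j ^ 2)}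

/-!
Two sparse graphs `g, g'` (at most `K` vertices of degree above `μ`) whose graph matrices `Y, Y'`
give the same measurements `B Y = B Y'` have `Y = Y'`. Every column of `D = Y - Y'` lies in the
kernel of `B`. A column indexed by a vertex of low degree in both graphs has at most `2μ` nonzero
entries, so it vanishes because `δ_{2μ} < 1`. By symmetry of `D`, every column is then supported
on the at most `2K` high-degree vertices, and vanishes because `spark(B) > 2K`. Hence exhaustive
search over the sparse graphs decodes `Y(G)` whenever `G` is sparse and `B` is good, which fails
with probability at most `ρ`.
-/

open Matrix

section

variable {m n : ℕ}

-- `ric` is an `sInf`, and `sInf ∅ = 0`: without this, `ric B s < 1` would give no usable bound.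
lemma ric_set_nonempty (B : Fin m → Fin n → ℝ) (s : ℕ) :
    {δ : ℝ | 0 ≤ δ ∧ ∀ x : Fin n → ℝ, Set.ncard {j | x j ≠ 0} ≤ s →
      (1 - δ) * (∑ j, x j ^ 2) ≤ (∑ i, (∑ j, B i j * x j) ^ 2) ∧
        (∑ i, (∑ j, B i j * x j) ^ 2) ≤ (1 + δ) * (∑ j, x j ^ 2)}.Nonempty := by
  set C : ℝ := ∑ i, ∑ j, B i j ^ 2
  have hC : 0 ≤ C := by positivity
  refine ⟨1 + C, by positivity, fun x _ => ⟨?_, ?_⟩⟩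
  · have : 0 ≤ ∑ i, (∑ j, B i j * x j) ^ 2 := by positivity
    nlinarith [show 0 ≤ ∑ j, x j ^ 2 by positivity]
  · have cauchySchwarz : ∑ i, (∑ j, B i j * x j) ^ 2 ≤ C * ∑ j, x j ^ 2 := by
      rw [Finset.sum_mul]
      exact Finset.sum_le_sum fun i _ => Finset.sum_mul_sq_le_sq_mul_sq _ (B i) x
    nlinarith [show 0 ≤ ∑ j, x j ^ 2 by positivity]

lemma ric_nonneg (B : Fin m → Fin n → ℝ) (s : ℕ) : 0 ≤ ric B s :=
  Real.sInf_nonneg fun _ hδ => hδ.1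

lemma eq_zero_of_ric_lt_one {B : Fin m → Fin n → ℝ} {s : ℕ} (h : ric B s < 1)
    {x : Fin n → ℝ} (hx : Set.ncard {j | x j ≠ 0} ≤ s) (hBx : B *ᵥ x = 0) : x = 0 := by
  obtain ⟨δ, ⟨-, hδ⟩, hδ1⟩ := (csInf_lt_iff ⟨0, fun _ hδ => hδ.1⟩ (ric_set_nonempty B s)).mp h
  have hlower := (hδ x hx).1
  have hBx' : ∑ i, (∑ j, B i j * x j) ^ 2 = 0 := by
    simp only [funext_iff, mulVec, dotProduct, Pi.zero_apply] at hBx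
    simp [hBx]
  have hnorm : ∑ j, x j ^ 2 = 0 := by
    nlinarith [show 0 ≤ ∑ j, x j ^ 2 by positivity]
  ext j
  simpa using (Finset.sum_eq_zero_iff_of_nonneg fun j _ => sq_nonneg (x j)).mp hnorm j
    (Finset.mem_univ j)

lemma eq_zero_of_card_lt_spark {B : Fin m → Fin n → ℝ} {s : Finset (Fin n)}
    (hs : (s.card : ℕ∞) < spark B) {x : Fin n → ℝ} (hx : ∀ j, x j ≠ 0 → j ∈ s)
    (hBx : B *ᵥ x = 0) : x = 0 := by
  have hindep : LinearIndepOn ℝ (fun j i => B i j) (s : Set (Fin n)) := by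
    by_contra hdep
    exact (sInf_le ⟨s, rfl, hdep⟩ : spark B ≤ s.card).not_gt hs
  have hsum : ∑ j ∈ s, x j • (fun i => B i j) = 0 := by
    rw [← hBx, Finset.sum_subset s.subset_univ fun j _ hj => by
      rw [not_imp_comm.mp (hx j) hj, zero_smul]]
    ext i
    simp [mulVec, dotProduct, mul_comm]
  ext j
  by_cases hj : x j = 0
  · exact hj
  · exact linearIndepOn_finset_iff.mp hindep x hsum j (hx j hj)

lemma IsGraphMatrix.adj_of_ne_zero {g : SimpleGraph (Fin n)} {Y : Fin n → Fin n → ℝ}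
    (hY : IsGraphMatrix g Y) {j k : Fin n} (h : Y k j ≠ 0) : g.Adj j k := by
  obtain ⟨-, hdiag, hadj⟩ := hY
  have hkj : k ≠ j := by rintro rfl; exact h (hdiag k)
  exact ((hadj k j hkj).mp h).symm

lemma ncard_support_sub_le {g g' : SimpleGraph (Fin n)} {Y Y' : Fin n → Fin n → ℝ}
    (hY : IsGraphMatrix g Y) (hY' : IsGraphMatrix g' Y') (j : Fin n) :
    Set.ncard {k | Y k j - Y' k j ≠ 0} ≤ gdeg g j + gdeg g' j := by
  have hsupp : {k | Y k j - Y' k j ≠ 0} ⊆ {k | g.Adj j k} ∪ {k | g'.Adj j k} := by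
    intro k hk
    by_cases h : Y k j = 0
    · exact Or.inr (hY'.adj_of_ne_zero fun h' => hk (by rw [h, h', sub_zero]))
    · exact Or.inl (hY.adj_of_ne_zero h)
  exact (Set.ncard_le_ncard hsupp).trans (Set.ncard_union_le _ _)

lemma mulVec_sub_col_eq_zero {B : Fin m → Fin n → ℝ} {Y Y' : Fin n → Fin n → ℝ}
    (h : matMul B Y = matMul B Y') (j : Fin n) : B *ᵥ (fun k => Y k j - Y' k j) = 0 := by
  ext i
  have hij := congrFun (congrFun h i) j
  simp only [matMul] at hij
  simp [mulVec, dotProduct, mul_sub, Finset.sum_sub_distrib, hij]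

def IsDegreeSparse (K μs : ℕ) (g : SimpleGraph (Fin n)) : Prop :=
  Set.ncard {v | μs < gdeg g v} ≤ K

theorem eq_of_matMul_eq {K μs : ℕ} {B : Fin m → Fin n → ℝ}
    (hspark : (2 * K : ℕ∞) < spark B) (hric : ric B (2 * μs) < 1)
    {g g' : SimpleGraph (Fin n)} {Y Y' : Fin n → Fin n → ℝ}
    (hY : IsGraphMatrix g Y) (hY' : IsGraphMatrix g' Y')
    (hg : IsDegreeSparse K μs g) (hg' : IsDegreeSparse K μs g')
    (h : matMul B Y = matMul B Y') : Y = Y' := by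
  classical
  set H : Finset (Fin n) := {v | μs < gdeg g v ∨ μs < gdeg g' v}
  have hlow : ∀ j ∉ H, ∀ k, Y k j = Y' k j := by
    intro j hj k
    simp only [H, Finset.mem_filter, Finset.mem_univ, true_and, not_or, not_lt] at hj
    have hcol := eq_zero_of_ric_lt_one hric
      ((ncard_support_sub_le hY hY' j).trans (by omega)) (mulVec_sub_col_eq_zero h j)
    exact sub_eq_zero.mp (congrFun hcol k)
  have hH : (H.card : ℕ∞) < spark B := by
    refine lt_of_le_of_lt ?_ hspark
    have : H.card ≤ 2 * K := by
      rw [← Set.ncard_coe_finset, Finset.coe_filter]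
      simp only [Finset.mem_univ, true_and, Set.ofPred_or]
      exact (Set.ncard_union_le _ _).trans (by unfold IsDegreeSparse at hg hg'; omega)
    exact_mod_cast this
  ext k j
  have hcol := eq_zero_of_card_lt_spark hH (x := fun k => Y k j - Y' k j)
    (fun k hk => by
      by_contra hkH
      rw [hY.1, hY'.1, hlow k hkH j, sub_self] at hk
      exact hk rfl)
    (mulVec_sub_col_eq_zero h j)
  exact sub_eq_zero.mp (congrFun hcol k)

open scoped Classical in
/-- Exhaustive search over the degree-sparse graphs, written as a sum: when exactly one candidate
matrix is consistent with the measurements (`eq_of_matMul_eq`), the sum is that candidate. -/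
def sparseGraphDecoder (K μs : ℕ) (Y : SimpleGraph (Fin n) → (Fin n → Fin n → ℝ))
    (A B : Fin m → Fin n → ℝ) : Fin n → Fin n → ℝ :=
  ∑ Z ∈ ({g | IsDegreeSparse K μs g} : Finset _).image Y, if matMul B Z = A then Z else 0

lemma measurable_sparseGraphDecoder (K μs : ℕ) (Y : SimpleGraph (Fin n) → (Fin n → Fin n → ℝ)) :
    Measurable fun q : (Fin m → Fin n → ℝ) × (Fin m → Fin n → ℝ) =>
      sparseGraphDecoder K μs Y q.1 q.2 := by
  unfold sparseGraphDecoder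
  refine Finset.measurable_sum _ fun Z _ => Measurable.ite ?_ measurable_const measurable_const
  refine (isClosed_eq ?_ continuous_fst).measurableSet
  unfold matMul
  fun_prop

lemma sparseGraphDecoder_matMul {K μs : ℕ} {B : Fin m → Fin n → ℝ}
    (hspark : (2 * K : ℕ∞) < spark B) (hric : ric B (2 * μs) < 1)
    {Y : SimpleGraph (Fin n) → (Fin n → Fin n → ℝ)} (hY : ∀ g, IsGraphMatrix g (Y g))
    {g : SimpleGraph (Fin n)} (hg : IsDegreeSparse K μs g) :
    sparseGraphDecoder K μs Y (matMul B (Y g)) B = Y g := by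
  classical
  unfold sparseGraphDecoder
  rw [Finset.sum_eq_single_of_mem (Y g) (Finset.mem_image_of_mem Y (by simpa using hg)),
    if_pos rfl]
  intro Z hZ hne
  obtain ⟨g', hg', rfl⟩ := Finset.mem_image.mp hZ
  rw [if_neg fun h => hne (eq_of_matMul_eq hspark hric (hY g') (hY g) (by simpa using hg') hg h)]

end

theorem three_stage_achievability_general {n m K μs : ℕ}
    {Ω : Type*} [MeasurableSpace Ω] (μ : Measure Ω)
    (G : Ω → SimpleGraph (Fin n)) (B : Ω → (Fin m → Fin n → ℝ))
    (Y : SimpleGraph (Fin n) → (Fin n → Fin n → ℝ))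
    (hY : ∀ g, IsGraphMatrix g (Y g))
    (ρ : ℝ)
    -- the graph distribution is `(μ, K, ρ)`-sparse
    (hsparse : μ {ω | K < Set.ncard {v : Fin n | μs < gdeg (G ω) v}} ≤ ENNReal.ofReal ρ)
    -- almost surely, `spark(B) > 2K` and `δ_{2μ} + δ_{3μ} < 1`
    (hB : ∀ᵐ ω ∂μ, (2 * K : ℕ∞) < spark (B ω) ∧ ric (B ω) (2 * μs) + ric (B ω) (3 * μs) < 1) :
    ∃ f : (Fin m → Fin n → ℝ) → (Fin m → Fin n → ℝ) → (Fin n → Fin n → ℝ),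
      Measurable (fun q : (Fin m → Fin n → ℝ) × (Fin m → Fin n → ℝ) => f q.1 q.2) ∧
      μ {ω | f (matMul (B ω) (Y (G ω))) (B ω) ≠ Y (G ω)} ≤ ENNReal.ofReal ρ := by
  refine ⟨sparseGraphDecoder K μs Y, measurable_sparseGraphDecoder K μs Y, ?_⟩
  refine (measure_mono_ae (hB.mono fun ω ⟨hspark, hric⟩ hfail => ?_)).trans hsparse
  by_contra hsparseω
  have hric2 : ric (B ω) (2 * μs) < 1 := by linarith [ric_nonneg (B ω) (3 * μs)]
  exact hfail (sparseGraphDecoder_matMul hspark hric2 hY (not_lt.mp hsparseω))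

/-- **Achievability of noiseless recovery for `(μ, K, ρ)`-sparse graph distributions.**
Let `G ~ 𝒢ₙ` be drawn from a `(μ, K, ρ)`-sparse distribution on simple graphs on `n`
vertices, let `Y(·)` be a graph-matrix assignment, and let `B` be an `m × n` random matrix,
independent of `G`, that almost surely satisfies `spark(B) > 2K` and `δ_{2μ} + δ_{3μ} < 1`.
With noiseless measurements `A = B·Y(G)`, there exists a measurable estimator
`X = f(A, B)` (realized by the three-stage recovery scheme) with `P(X ≠ Y(G)) ≤ ρ`. -/
theorem three_stage_achievability {n m K μs : ℕ}
    (hn : 0 < n) (hm : 0 < m) (hK : 0 < K) (hμs : 0 < μs)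
    {Ω : Type*} [MeasurableSpace Ω] (μ : Measure Ω) [IsProbabilityMeasure μ]
    (G : Ω → SimpleGraph (Fin n)) (B : Ω → (Fin m → Fin n → ℝ))
    (hGmeas : Measurable G) (hBmeas : Measurable B)
    (hG_B : IndepFun G B μ)
    (Y : SimpleGraph (Fin n) → (Fin n → Fin n → ℝ))
    (hY : ∀ g, IsGraphMatrix g (Y g))
    (ρ : ℝ) (hρ : 0 ≤ ρ)
    -- the graph distribution is `(μ, K, ρ)`-sparse
    (hsparse : μ {ω | K < Set.ncard {v : Fin n | μs < gdeg (G ω) v}} ≤ ENNReal.ofReal ρ)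
    -- almost surely, `spark(B) > 2K` and `δ_{2μ} + δ_{3μ} < 1`
    (hB : ∀ᵐ ω ∂μ, (2 * K : ℕ∞) < spark (B ω) ∧ ric (B ω) (2 * μs) + ric (B ω) (3 * μs) < 1) :
    ∃ f : (Fin m → Fin n → ℝ) → (Fin m → Fin n → ℝ) → (Fin n → Fin n → ℝ),
      Measurable (fun q : (Fin m → Fin n → ℝ) × (Fin m → Fin n → ℝ) => f q.1 q.2) ∧
      μ {ω | f (matMul (B ω) (Y (G ω))) (B ω) ≠ Y (G ω)} ≤ ENNReal.ofReal ρ :=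
  three_stage_achievability_general μ G B Y hY ρ hsparse hB

end
end

section
/- Fix positive integers m, n, K, μ. There exists a map f : ℝ^{m×n} × ℝ^{m×n} → ℝ^{n×n} such that for every matrix B ∈ ℝ^{m×n} with spark(B) > 2K whose restricted isometry constants satisfy δ_{2μ} + δ_{3μ} < 1, and for every symmetric matrix Y ∈ ℝ^{n×n} all but at most K of whose columns have at most μ nonzero entries, one has f(B·Y, B) = Y. -/
noncomputable section

/-!
The measurements determine `Y`. If `Y` and `Y'` are both admissible with `BY = BY'`, then
`D = Y - Y'` is symmetric with `BD = 0`. Outside the at most `2K` columns that are dense in `Y`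
or in `Y'`, every column of `D` is `2μ`-sparse and lies in the kernel of `B`, so it vanishes
because `δ_{2μ} < 1`. By symmetry the remaining columns are then supported on those at most `2K`
indices, and `spark B > 2K` forces them to vanish as well.
-/

namespace ThreeStageRecovery

open Finset

variable {m n : ℕ}

def IsRIPConstant (B : Fin m → Fin n → ℝ) (s : ℕ) (δ : ℝ) : Prop :=
  0 ≤ δ ∧ ∀ x : Fin n → ℝ, Set.ncard {j | x j ≠ 0} ≤ s →
    (1 - δ) * (∑ j, x j ^ 2) ≤ (∑ i, (∑ j, B i j * x j) ^ 2) ∧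
      (∑ i, (∑ j, B i j * x j) ^ 2) ≤ (1 + δ) * (∑ j, x j ^ 2)

theorem ric_eq_sInf (B : Fin m → Fin n → ℝ) (s : ℕ) :
    ric B s = sInf {δ | IsRIPConstant B s δ} := rfl

/-- By Cauchy–Schwarz, `‖Bx‖₂² ≤ ‖B‖_F² ‖x‖₂²`, so `max 1 ‖B‖_F²` is a valid constant. -/
theorem exists_isRIPConstant (B : Fin m → Fin n → ℝ) (s : ℕ) :
    ∃ δ, IsRIPConstant B s δ := by
  set C : ℝ := ∑ i, ∑ j, B i j ^ 2
  refine ⟨max 1 C, zero_le_one.trans (le_max_left _ _), fun x _ => ⟨?_, ?_⟩⟩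
  · have hx : 0 ≤ ∑ j, x j ^ 2 := sum_nonneg fun j _ => sq_nonneg _
    calc (1 - max 1 C) * ∑ j, x j ^ 2
        ≤ 0 := mul_nonpos_of_nonpos_of_nonneg (sub_nonpos.2 (le_max_left 1 C)) hx
      _ ≤ _ := sum_nonneg fun i _ => sq_nonneg _
  · calc ∑ i, (∑ j, B i j * x j) ^ 2
        ≤ ∑ i, (∑ j, B i j ^ 2) * ∑ j, x j ^ 2 :=
          sum_le_sum fun i _ => sum_mul_sq_le_sq_mul_sq _ _ _
      _ = C * ∑ j, x j ^ 2 := by rw [← sum_mul]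
      _ ≤ (1 + max 1 C) * ∑ j, x j ^ 2 := by
          gcongr
          linarith [le_max_right 1 C]

theorem ric_nonneg (B : Fin m → Fin n → ℝ) (s : ℕ) : 0 ≤ ric B s :=
  Real.sInf_nonneg fun _ hδ => hδ.1

theorem eq_zero_of_ric_lt_one {B : Fin m → Fin n → ℝ} {s : ℕ} (hB : ric B s < 1)
    {x : Fin n → ℝ} (hx : Set.ncard {j | x j ≠ 0} ≤ s) (hBx : ∀ i, ∑ j, B i j * x j = 0) :
    x = 0 := by
  obtain ⟨δ, ⟨-, hδ⟩, hδ1⟩ :=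
    exists_lt_of_csInf_lt (exists_isRIPConstant B s) (ric_eq_sInf B s ▸ hB)
  have hlower := (hδ x hx).1
  simp only [hBx, zero_pow two_ne_zero, sum_const_zero] at hlower
  have hnorm : ∑ j, x j ^ 2 = 0 :=
    le_antisymm (nonpos_of_mul_nonpos_right hlower (by linarith))
      (sum_nonneg fun j _ => sq_nonneg _)
  funext j
  simpa using (sum_eq_zero_iff_of_nonneg fun j _ => sq_nonneg (x j)).1 hnorm j (mem_univ j)

theorem eq_zero_of_card_lt_spark {B : Fin m → Fin n → ℝ} {x : Fin n → ℝ}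
    (T : Finset (Fin n)) (hT : (T.card : ℕ∞) < spark B) (hxT : ∀ j ∉ T, x j = 0)
    (hBx : ∀ i, ∑ j, B i j * x j = 0) : x = 0 := by
  have hli : LinearIndependent ℝ (fun j : T => fun i => B i j.1) := by
    by_contra hdep
    exact (sInf_le ⟨T, rfl, hdep⟩ : spark B ≤ T.card).not_gt hT
  have hcomb : ∑ j : T, x j • (fun i => B i j.1) = 0 := by
    funext i
    rw [Finset.sum_apply, Pi.zero_apply, ← hBx i, ← sum_subset (subset_univ T) fun j _ hj => by
      simp [hxT j hj], ← sum_attach T]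
    exact sum_congr rfl fun _ _ => mul_comm _ _
  funext j
  by_cases hj : j ∈ T
  · exact Fintype.linearIndependent_iff.1 hli (fun j => x j) hcomb ⟨j, hj⟩
  · exact hxT j hj

theorem matMul_sub {p : ℕ} (B : Fin m → Fin n → ℝ) (Y Y' : Fin n → Fin p → ℝ) :
    matMul B (Y - Y') = matMul B Y - matMul B Y' := by
  funext i j
  simp only [matMul, Pi.sub_apply, mul_sub, sum_sub_distrib]

theorem eq_zero_of_symm_of_matMul_eq_zero {B : Fin m → Fin n → ℝ} {D : Fin n → Fin n → ℝ}
    (hD : ∀ i j, D i j = D j i) (hBD : matMul B D = 0) {s : ℕ} (hB : ric B s < 1)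
    (S : Finset (Fin n)) (hS : (S.card : ℕ∞) < spark B)
    (hsparse : ∀ j ∉ S, Set.ncard {i | D i j ≠ 0} ≤ s) : D = 0 := by
  have hcol : ∀ j i, ∑ k, B i k * D k j = 0 := fun j i => congrFun (congrFun hBD i) j
  have hout : ∀ j ∉ S, (fun k => D k j) = 0 := fun j hj =>
    eq_zero_of_ric_lt_one hB (hsparse j hj) (hcol j)
  funext i j
  by_cases hj : j ∈ S
  · -- by symmetry, entry `k` of column `j` is entry `j` of column `k`, which vanishes for `k ∉ S`
    have hin := eq_zero_of_card_lt_spark S hS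
      (fun k hk => (hD k j).trans (congrFun (hout k hk) j)) (hcol j)
    exact congrFun hin i
  · exact congrFun (hout j hj) i

def IsSymmApproxSparse (K μ : ℕ) (Y : Fin n → Fin n → ℝ) : Prop :=
  (∀ i j, Y i j = Y j i) ∧ Set.ncard {j : Fin n | μ < Set.ncard {i : Fin n | Y i j ≠ 0}} ≤ K

theorem eq_of_matMul_eq {B : Fin m → Fin n → ℝ} {K μ : ℕ} (hspark : (2 * K : ℕ∞) < spark B)
    (hB : ric B (2 * μ) < 1) {Y Y' : Fin n → Fin n → ℝ} (hY : IsSymmApproxSparse K μ Y)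
    (hY' : IsSymmApproxSparse K μ Y') (h : matMul B Y = matMul B Y') : Y = Y' := by
  classical
  set S : Finset (Fin n) := univ.filter fun j =>
    μ < Set.ncard {i | Y i j ≠ 0} ∨ μ < Set.ncard {i | Y' i j ≠ 0}
  have hS : (S.card : ℕ∞) < spark B := by
    have hcard : S.card ≤ 2 * K := by
      rw [← Set.ncard_coe_finset, coe_filter_univ, Set.ofPred_or]
      exact (Set.ncard_union_le _ _).trans (by linarith [hY.2, hY'.2])
    exact lt_of_le_of_lt (by exact_mod_cast hcard) hspark
  have hsparse : ∀ j ∉ S, Set.ncard {i | (Y - Y') i j ≠ 0} ≤ 2 * μ := by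
    intro j hj
    simp only [S, mem_filter, mem_univ, true_and, not_or, not_lt] at hj
    have hsub : {i | (Y - Y') i j ≠ 0} ⊆ {i | Y i j ≠ 0} ∪ {i | Y' i j ≠ 0} := by
      intro i hi
      by_contra hnot
      simp_all
    calc Set.ncard {i | (Y - Y') i j ≠ 0}
        ≤ Set.ncard ({i | Y i j ≠ 0} ∪ {i | Y' i j ≠ 0}) := Set.ncard_le_ncard hsub
      _ ≤ 2 * μ := (Set.ncard_union_le _ _).trans (by linarith [hj.1, hj.2])
  refine sub_eq_zero.1 (eq_zero_of_symm_of_matMul_eq_zero (fun i j => ?_)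
    (by rw [matMul_sub, h, sub_self]) hB S hS hsparse)
  simp only [Pi.sub_apply, hY.1 i j, hY'.1 i j]

/-- Decoding by choice rather than by the three-stage algorithm: on admissible inputs the two
agree, since the consistent admissible matrix is unique. -/
def decode (K μ : ℕ) (p : (Fin m → Fin n → ℝ) × (Fin m → Fin n → ℝ)) :
    Fin n → Fin n → ℝ :=
  open Classical in
  if h : ∃ Y, IsSymmApproxSparse K μ Y ∧ matMul p.2 Y = p.1 then h.choose else 0

theorem decode_spec {K μ : ℕ} {A B : Fin m → Fin n → ℝ}
    (h : ∃ Y, IsSymmApproxSparse K μ Y ∧ matMul B Y = A) :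
    IsSymmApproxSparse K μ (decode K μ (A, B)) ∧ matMul B (decode K μ (A, B)) = A := by
  rw [decode, dif_pos h]
  exact h.choose_spec

end ThreeStageRecovery

theorem three_stage_exact_recovery_general {m n K μ : ℕ} :
    ∃ f : (Fin m → Fin n → ℝ) × (Fin m → Fin n → ℝ) → (Fin n → Fin n → ℝ),
      ∀ B : Fin m → Fin n → ℝ,
        (2 * K : ℕ∞) < spark B →
        ric B (2 * μ) + ric B (3 * μ) < 1 →
        ∀ Y : Fin n → Fin n → ℝ,
          (∀ i j, Y i j = Y j i) →
          Set.ncard {j : Fin n | μ < Set.ncard {i : Fin n | Y i j ≠ 0}} ≤ K →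
          f (matMul B Y, B) = Y := by
  refine ⟨ThreeStageRecovery.decode K μ, fun B hspark hric Y hsymm hdense => ?_⟩
  have hY : ThreeStageRecovery.IsSymmApproxSparse K μ Y := ⟨hsymm, hdense⟩
  obtain ⟨hdec, hBdec⟩ := ThreeStageRecovery.decode_spec ⟨Y, hY, rfl⟩
  have hB : ric B (2 * μ) < 1 := by linarith [ThreeStageRecovery.ric_nonneg B (3 * μ)]
  exact ThreeStageRecovery.eq_of_matMul_eq hspark hB hdec hY hBdec

/-- **Deterministic exact recovery of approximately column-sparse symmetric matrices.**
Fix positive integers `m, n, K, μ`.  There is a map `f : ℝ^{m×n} × ℝ^{m×n} → ℝ^{n×n}` such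
that for every `B ∈ ℝ^{m×n}` with `spark(B) > 2K` and restricted isometry constants
satisfying `δ_{2μ} + δ_{3μ} < 1`, and every symmetric `Y ∈ ℝ^{n×n}` all but at most `K` of
whose columns have at most `μ` nonzero entries, one has `f(B·Y, B) = Y`. -/
theorem three_stage_exact_recovery {m n K μ : ℕ}
    (hm : 0 < m) (hn : 0 < n) (hK : 0 < K) (hμ : 0 < μ) :
    ∃ f : (Fin m → Fin n → ℝ) × (Fin m → Fin n → ℝ) → (Fin n → Fin n → ℝ),
      ∀ B : Fin m → Fin n → ℝ,
        (2 * K : ℕ∞) < spark B →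
        ric B (2 * μ) + ric B (3 * μ) < 1 →
        ∀ Y : Fin n → Fin n → ℝ,
          (∀ i j, Y i j = Y j i) →
          Set.ncard {j : Fin n | μ < Set.ncard {i : Fin n | Y i j ≠ 0}} ≤ K →
          f (matMul B Y, B) = Y :=
  three_stage_exact_recovery_general

end
end

section
/- Let B ∈ ℝ^{m×n}, let K be a positive integer, and let δ ∈ [0,1) be such that (1−δ)·‖x‖₂² ≤ ‖Bx‖₂² for every x ∈ ℝⁿ with at most 2K nonzero entries. Let A ∈ ℝ^m, γ ≥ 0, Γ ≥ 0, and let y, y* ∈ ℝⁿ satisfy ‖By − A‖₂ ≤ γ and ‖By* − A‖₂ ≤ γ. Suppose e := y* − y can be decomposed as e = ē + f where ē has at most 2K nonzero entries and |f_i| ≤ 2Γ for every coordinate i. Then ‖e‖₂ ≤ 2γ/(1−δ) + 2nΓ·(1 + ‖B‖₂/(1−δ)), where ‖B‖₂ denotes the ℓ2 operator norm of B. -/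
/-!
Both `y` and `y*` are `γ`-feasible, so `‖B e‖₂ ≤ 2γ`. The restricted isometry bound, taken
without squares (possible since `0 ≤ 1 - δ ≤ 1`), controls the sparse part:
`(1 - δ)‖ē‖₂ ≤ ‖B ē‖₂ ≤ ‖B e‖₂ + ‖B f‖₂ ≤ 2γ + ‖B‖₂ ‖f‖₂`, and the perturbation is small,
`‖f‖₂ ≤ ‖f‖₁ ≤ 2nΓ`. Conclude with `‖e‖₂ ≤ ‖ē‖₂ + ‖f‖₂`.
-/

noncomputable section

/-- Euclidean (`ℓ2`) norm of a finite real vector. -/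
def norm2 {k : ℕ} (x : Fin k → ℝ) : ℝ :=
  Real.sqrt (∑ i, x i ^ 2)

/-- Matrix–vector product. -/
def matVec {m n : ℕ} (B : Fin m → Fin n → ℝ) (x : Fin n → ℝ) : Fin m → ℝ :=
  fun i => ∑ j, B i j * x j

/-- The `ℓ2` operator norm of an `m × n` real matrix, defined as the least nonnegative
constant `c` with `‖Bx‖₂ ≤ c‖x‖₂` for all `x`. -/
def opNorm {m n : ℕ} (B : Fin m → Fin n → ℝ) : ℝ :=
  sInf {c : ℝ | 0 ≤ c ∧ ∀ x : Fin n → ℝ, norm2 (matVec B x) ≤ c * norm2 x}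

lemma norm2_eq_norm {k : ℕ} (x : Fin k → ℝ) : norm2 x = ‖WithLp.toLp 2 x‖ := by
  simp [norm2, EuclideanSpace.norm_eq, sq_abs]

lemma norm2_nonneg {k : ℕ} (x : Fin k → ℝ) : 0 ≤ norm2 x := Real.sqrt_nonneg _

lemma norm2_add_le {k : ℕ} (x y : Fin k → ℝ) : norm2 (x + y) ≤ norm2 x + norm2 y := by
  simpa only [norm2_eq_norm, WithLp.toLp_add] using norm_add_le _ _

lemma norm2_sub_le {k : ℕ} (x y : Fin k → ℝ) : norm2 (x - y) ≤ norm2 x + norm2 y := by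
  simpa only [norm2_eq_norm, WithLp.toLp_sub] using norm_sub_le _ _

lemma norm2_le_sum_abs {k : ℕ} (x : Fin k → ℝ) : norm2 x ≤ ∑ i, |x i| := by
  refine Real.sqrt_le_iff.mpr ⟨by positivity, ?_⟩
  simpa only [sq_abs] using
    Finset.sum_sq_le_sq_sum_of_nonneg (s := Finset.univ) fun i _ => abs_nonneg (x i)

lemma norm2_le_card_mul {k : ℕ} {x : Fin k → ℝ} {c : ℝ} (hx : ∀ i, |x i| ≤ c) :
    norm2 x ≤ k * c :=
  calc norm2 x ≤ ∑ i, |x i| := norm2_le_sum_abs x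
    _ ≤ ∑ _i : Fin k, c := Finset.sum_le_sum fun i _ => hx i
    _ = k * c := by simp

lemma matVec_eq_mulVec {m n : ℕ} (B : Fin m → Fin n → ℝ) (x : Fin n → ℝ) :
    matVec B x = (Matrix.of B).mulVec x := rfl

lemma matVec_sub {m n : ℕ} (B : Fin m → Fin n → ℝ) (x y : Fin n → ℝ) :
    matVec B (x - y) = matVec B x - matVec B y := by
  simp only [matVec_eq_mulVec, Matrix.mulVec_sub]

lemma matVec_add {m n : ℕ} (B : Fin m → Fin n → ℝ) (x y : Fin n → ℝ) :
    matVec B (x + y) = matVec B x + matVec B y := by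
  simp only [matVec_eq_mulVec, Matrix.mulVec_add]

def matVecCLM {m n : ℕ} (B : Fin m → Fin n → ℝ) :
    EuclideanSpace ℝ (Fin n) →L[ℝ] EuclideanSpace ℝ (Fin m) :=
  LinearMap.toContinuousLinearMap (Matrix.toEuclideanLin (Matrix.of B))

lemma matVecCLM_toLp {m n : ℕ} (B : Fin m → Fin n → ℝ) (x : Fin n → ℝ) :
    matVecCLM B (WithLp.toLp 2 x) = WithLp.toLp 2 (matVec B x) := rfl

lemma opNorm_eq_norm {m n : ℕ} (B : Fin m → Fin n → ℝ) : opNorm B = ‖matVecCLM B‖ := by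
  rw [ContinuousLinearMap.norm_def, opNorm]
  congr! 4 with c
  constructor
  · intro h x
    simpa only [norm2_eq_norm, ← matVecCLM_toLp, WithLp.toLp_ofLp] using h x.ofLp
  · intro h x
    simpa only [norm2_eq_norm, matVecCLM_toLp] using h (WithLp.toLp 2 x)

lemma norm2_matVec_le {m n : ℕ} (B : Fin m → Fin n → ℝ) (x : Fin n → ℝ) :
    norm2 (matVec B x) ≤ opNorm B * norm2 x := by
  simpa only [opNorm_eq_norm, norm2_eq_norm, matVecCLM_toLp] using
    (matVecCLM B).le_opNorm (WithLp.toLp 2 x)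

lemma opNorm_nonneg {m n : ℕ} (B : Fin m → Fin n → ℝ) : 0 ≤ opNorm B :=
  opNorm_eq_norm B ▸ norm_nonneg _

lemma mul_le_of_mul_sq_le_sq {a u v : ℝ} (ha0 : 0 ≤ a) (ha1 : a ≤ 1) (hu : 0 ≤ u) (hv : 0 ≤ v)
    (h : a * u ^ 2 ≤ v ^ 2) : a * u ≤ v := by
  refine (pow_le_pow_iff_left₀ (by positivity) hv two_ne_zero).mp ?_
  calc (a * u) ^ 2 = a * (a * u ^ 2) := by ring
    _ ≤ 1 * (a * u ^ 2) := by gcongr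
    _ ≤ v ^ 2 := by rwa [one_mul]

lemma norm2_matVec_sub_le_of_feasible {m n : ℕ} {B : Fin m → Fin n → ℝ} {A : Fin m → ℝ} {γ : ℝ}
    {y y' : Fin n → ℝ} (hy : norm2 (matVec B y - A) ≤ γ) (hy' : norm2 (matVec B y' - A) ≤ γ) :
    norm2 (matVec B (y' - y)) ≤ 2 * γ :=
  calc norm2 (matVec B (y' - y)) = norm2 ((matVec B y' - A) - (matVec B y - A)) := by
        rw [matVec_sub, sub_sub_sub_cancel_right]
    _ ≤ 2 * γ := by linarith [norm2_sub_le (matVec B y' - A) (matVec B y - A)]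

theorem consistency_check_estimate_general {m n K : ℕ}
    (B : Fin m → Fin n → ℝ)
    {δ : ℝ} (hδ0 : 0 ≤ δ) (hδ1 : δ < 1)
    (hRIP : ∀ x : Fin n → ℝ, Set.ncard {j | x j ≠ 0} ≤ 2 * K →
      (1 - δ) * norm2 x ^ 2 ≤ norm2 (matVec B x) ^ 2)
    (A : Fin m → ℝ) (γ Γ : ℝ)
    (y ystar : Fin n → ℝ)
    (hy : norm2 (fun i => matVec B y i - A i) ≤ γ)
    (hystar : norm2 (fun i => matVec B ystar i - A i) ≤ γ)
    (ebar f : Fin n → ℝ)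
    (hdecomp : ∀ j, ystar j - y j = ebar j + f j)
    (hebar : Set.ncard {j | ebar j ≠ 0} ≤ 2 * K)
    (hf : ∀ j, |f j| ≤ 2 * Γ) :
    norm2 (fun j => ystar j - y j)
      ≤ 2 * γ / (1 - δ) + 2 * n * Γ * (1 + opNorm B / (1 - δ)) := by
  have hδ : 0 < 1 - δ := sub_pos.mpr hδ1
  have he : ystar - y = ebar + f := funext hdecomp
  have hBe : norm2 (matVec B (ebar + f)) ≤ 2 * γ :=
    he ▸ norm2_matVec_sub_le_of_feasible hy hystar
  have hnf : norm2 f ≤ n * (2 * Γ) := norm2_le_card_mul hf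
  have hebar_le : (1 - δ) * norm2 ebar ≤ 2 * γ + opNorm B * norm2 f :=
    calc (1 - δ) * norm2 ebar ≤ norm2 (matVec B ebar) :=
          mul_le_of_mul_sq_le_sq hδ.le (by linarith) (norm2_nonneg _) (norm2_nonneg _)
            (hRIP ebar hebar)
      _ = norm2 (matVec B (ebar + f) - matVec B f) := by rw [matVec_add, add_sub_cancel_right]
      _ ≤ 2 * γ + opNorm B * norm2 f :=
          (norm2_sub_le _ _).trans (add_le_add hBe (norm2_matVec_le B f))
  have hop := opNorm_nonneg B
  calc norm2 (ystar - y) ≤ norm2 ebar + norm2 f := he ▸ norm2_add_le ebar f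
    _ ≤ (2 * γ + opNorm B * norm2 f) / (1 - δ) + norm2 f := by
        gcongr; rwa [le_div_iff₀' hδ]
    _ ≤ (2 * γ + opNorm B * (n * (2 * Γ))) / (1 - δ) + n * (2 * Γ) := by gcongr
    _ = 2 * γ / (1 - δ) + 2 * n * Γ * (1 + opNorm B / (1 - δ)) := by field_simp; ring

/-- **Key deterministic estimate of the achievability proof (Theorem 3).**
Let `B ∈ ℝ^{m×n}`, `K > 0`, and `δ ∈ [0,1)` satisfy the lower restricted isometry
inequality `(1−δ)‖x‖₂² ≤ ‖Bx‖₂²` for every `2K`-sparse `x`.  If `y, y*` are both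
`γ`-feasible for the measurements `A` (i.e. `‖By − A‖₂ ≤ γ` and `‖By* − A‖₂ ≤ γ`) and
`e = y* − y = ē + f` with `ē` `2K`-sparse and `|f_i| ≤ 2Γ` for every `i`, then
`‖e‖₂ ≤ 2γ/(1−δ) + 2nΓ(1 + ‖B‖₂/(1−δ))`. -/
theorem consistency_check_estimate {m n K : ℕ} (hK : 0 < K)
    (B : Fin m → Fin n → ℝ)
    {δ : ℝ} (hδ0 : 0 ≤ δ) (hδ1 : δ < 1)
    (hRIP : ∀ x : Fin n → ℝ, Set.ncard {j | x j ≠ 0} ≤ 2 * K →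
      (1 - δ) * norm2 x ^ 2 ≤ norm2 (matVec B x) ^ 2)
    (A : Fin m → ℝ) (γ Γ : ℝ) (hγ : 0 ≤ γ) (hΓ : 0 ≤ Γ)
    (y ystar : Fin n → ℝ)
    (hy : norm2 (fun i => matVec B y i - A i) ≤ γ)
    (hystar : norm2 (fun i => matVec B ystar i - A i) ≤ γ)
    (ebar f : Fin n → ℝ)
    (hdecomp : ∀ j, ystar j - y j = ebar j + f j)
    (hebar : Set.ncard {j | ebar j ≠ 0} ≤ 2 * K)
    (hf : ∀ j, |f j| ≤ 2 * Γ) :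
    norm2 (fun j => ystar j - y j)
      ≤ 2 * γ / (1 - δ) + 2 * n * Γ * (1 + opNorm B / (1 - δ)) :=
  consistency_check_estimate_general B hδ0 hδ1 hRIP A γ Γ y ystar hy hystar ebar f hdecomp hebar hf

end
end
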